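/- Every instance over the signature S of the strong Composition scheme: [X⃗←x⃗](W = w) → ([X⃗←x⃗](Y = y) ↔ [X⃗←x⃗; W←w](Y = y)), for an endogenous variable W not occurring in X⃗ and Y ≠ W, is valid with respect to the class Mrec(Φ_S) of recursive counterfactual structures. -/

import Mathlib

/-! ## Signatures -/

structure Signature where
  exo : Type
  endo : Type
  exoFin : Fintype exo
  endoFin : Fintype endo
  endoDec : DecidableEq endo
  exoRange : exo → Type
  range : endo → Type
  exoRangeFin : ∀ u, Fintype (exoRange u)
  rangeFin : ∀ X, Fintype (range X)
  exoRangeNe : ∀ u, Nonempty (exoRange u)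
  rangeNe : ∀ X, Nonempty (range X)

attribute [instance] Signature.exoFin Signature.endoFin Signature.endoDec
  Signature.exoRangeFin Signature.rangeFin Signature.exoRangeNe Signature.rangeNe

/-- A context: an assignment of values to the exogenous variables. -/
abbrev Signature.Ctx (S : Signature) : Type := ∀ u : S.exo, S.exoRange u

/-- An assignment of values to the endogenous variables. -/
abbrev Signature.Asgn (S : Signature) : Type := ∀ X : S.endo, S.range X

/-- An intervention `Y⃗ ← y⃗`: a partial assignment of values to (distinct)
endogenous variables. -/
abbrev Signature.Intervention (S : Signature) : Type := ∀ X : S.endo, Option (S.range X)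

/-- The primitive propositions Φ_S : propositions `X = x` for `X ∈ V`, `x ∈ R(X)`. -/
abbrev Signature.Atom (S : Signature) : Type := Σ X : S.endo, S.range X

/-! ## Counterfactual structures -/

/-- A counterfactual structure over the primitive propositions `Φ`:
a finite set of worlds, a valuation, and a ternary relation `R`,
where `R w u v` means `u ⪯_w v`. -/
structure CStruct (Φ : Type) where
  World : Type
  worldFin : Fintype World
  val : World → Φ → Prop
  R : World → World → World → Prop
  self_mem : ∀ w, ∃ v, R w w v
  refl_on : ∀ w u, (∃ v, R w u v) → R w u u
  trans_on : ∀ w u v x, (∃ y, R w u y) → (∃ y, R w v y) → (∃ y, R w x y) →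
    R w u v → R w v x → R w u x
  centered : ∀ w u, u ≠ w → (R w w u ∧ ¬ R w u w)

attribute [instance] CStruct.worldFin

namespace CStruct

variable {Φ : Type} (M : CStruct Φ)

/-- `u ∈ W_w` : `u ⪯_w v` for some `v`. -/
def inW (w u : M.World) : Prop := ∃ v, M.R w u v

/-- `u ≺_w v` : `u ⪯_w v` and not `v ⪯_w u`. -/
def lt (w u v : M.World) : Prop := M.R w u v ∧ ¬ M.R w v u

/-- The set of worlds in `W_w` satisfying `A` that are closest to `w`. -/
def closest (w : M.World) (A : M.World → Prop) : Set M.World :=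
  {v | M.inW w v ∧ A v ∧ ∀ v', A v' → ¬ M.lt w v' v}

/-- `(M,w) ⊨ A > B` : every closest world to `w` satisfying `A` satisfies `B`. -/
def cfSat (w : M.World) (A B : M.World → Prop) : Prop :=
  ∀ v ∈ M.closest w A, B v

/-- Membership in `M⁺`: each `≺_w` is a strict total order on `W_w`. -/
def totalOrd : Prop :=
  ∀ w u v, M.inW w u → M.inW w v → u ≠ v → M.lt w u v ∨ M.lt w v u

end CStruct

/-! ## Acceptable and full structures over Φ_S -/

/-- At every world, for each variable `X` exactly one proposition `X = x` is true. -/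
def Acceptable (S : Signature) (M : CStruct S.Atom) : Prop :=
  ∀ (w : M.World) (X : S.endo), ∃! x : S.range X, M.val w ⟨X, x⟩

/-- Every assignment of values to the endogenous variables is realized at some
world of `W_w`, for every world `w`. -/
def Full (S : Signature) (M : CStruct S.Atom) : Prop :=
  ∀ (w : M.World) (a : S.Asgn), ∃ v, M.inW w v ∧ ∀ X : S.endo, M.val v ⟨X, a X⟩

/-- The antecedent `Y⃗ = y⃗` (a conjunction of atoms) of the counterfactual
corresponding to the intervention `g`, as a predicate on worlds. -/
def intAnte (S : Signature) (M : CStruct S.Atom) (g : S.Intervention) :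
    M.World → Prop :=
  fun v => ∀ (Y : S.endo) (y : S.range Y), g Y = some y → M.val v ⟨Y, y⟩

/-- `(M,w) ⊨ [Y⃗ ← y⃗](X = x)`, read as the counterfactual
`(Y₁ = y₁ ∧ ... ∧ Y_k = y_k) > (X = x)`. -/
def satBasic (S : Signature) (M : CStruct S.Atom) (w : M.World)
    (g : S.Intervention) (X : S.endo) (x : S.range X) : Prop :=
  M.cfSat w (intAnte S M g) (fun v => M.val v ⟨X, x⟩)

/-- Recursive counterfactual structures `Mrec(Φ_S)`: full acceptable structures in
`M⁺` such that for each world there is a strict total order `≺` on the endogenous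
variables such that if `W' ≺ Y` then setting `Y` (in addition to `X⃗`) does not
change the value of `W'` at the closest world. -/
def MRec (S : Signature) (M : CStruct S.Atom) : Prop :=
  Acceptable S M ∧ Full S M ∧ M.totalOrd ∧
  ∀ w : M.World, ∃ vlt : S.endo → S.endo → Prop, IsStrictTotalOrder S.endo vlt ∧
    ∀ W' Y : S.endo, vlt W' Y →
      ∀ g : S.Intervention, g W' = none → g Y = none →
        ∀ (y : S.range Y) (w' : S.range W'),
          (satBasic S M w (Function.update g Y (some y)) W' w' ↔ satBasic S M w g W' w')

/-! ## Causal models -/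

/-- A causal model over `S`: for each endogenous variable `X`, a structural
equation `F_X` mapping the values of all the other variables to a value of `X`. -/
structure CausalModel (S : Signature) where
  F : ∀ X : S.endo, S.Ctx → (∀ Y : {Y : S.endo // Y ≠ X}, S.range Y.1) → S.range X

namespace CausalModel

variable {S : Signature}

/-- `a` is a solution of the equations of `T_{g}` in context `u`. -/
def isSolution (T : CausalModel S) (g : S.Intervention) (u : S.Ctx) (a : S.Asgn) : Prop :=
  ∀ X : S.endo,
    (∀ x : S.range X, g X = some x → a X = x) ∧
    (g X = none → a X = T.F X u (fun Y => a Y.1))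

/-- `T` is recursive (acyclic): membership in `Trec(S)`. -/
def Recursive (T : CausalModel S) : Prop :=
  ∃ vlt : S.endo → S.endo → Prop, IsStrictTotalOrder S.endo vlt ∧
    ∀ X Y : S.endo, vlt X Y →
      ∀ (u : S.Ctx) (a a' : ∀ Z : {Z : S.endo // Z ≠ X}, S.range Z.1),
        (∀ Z : {Z : S.endo // Z ≠ X}, Z.1 ≠ Y → a Z = a' Z) →
        T.F X u a = T.F X u a'

/-- Membership in `Tun(S)`: all the equations of every `T_{X⃗ ← x⃗}` have a
unique solution in every context. -/
def UniqueSolutions (T : CausalModel S) : Prop :=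
  ∀ (g : S.Intervention) (u : S.Ctx), ∃! a : S.Asgn, T.isSolution g u a

end CausalModel

/-! ## The language Lprop(S) -/

/-- `Lprop(S)`: Boolean combinations of basic formulas `[Y⃗ ← y⃗](X = x)`. -/
inductive LProp (S : Signature) : Type
  | basic (g : S.Intervention) (X : S.endo) (x : S.range X) : LProp S
  | neg : LProp S → LProp S
  | and : LProp S → LProp S → LProp S

/-- Satisfaction of `Lprop(S)` formulas in a causal model, relative to a context. -/
def CausalModel.sat {S : Signature} (T : CausalModel S) (u : S.Ctx) : LProp S → Prop
  | .basic g X x => ∀ a : S.Asgn, T.isSolution g u a → a X = x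
  | .neg φ => ¬ CausalModel.sat T u φ
  | .and φ ψ => CausalModel.sat T u φ ∧ CausalModel.sat T u ψ

/-- Satisfaction of `Lprop(S)` formulas in a counterfactual structure over `Φ_S`. -/
def satL {S : Signature} (M : CStruct S.Atom) (w : M.World) : LProp S → Prop
  | .basic g X x => satBasic S M w g X x
  | .neg φ => ¬ satL M w φ
  | .and φ ψ => satL M w φ ∧ satL M w ψ

namespace LProp

variable {S : Signature}

def imp (φ ψ : LProp S) : LProp S := .neg (.and φ (.neg ψ))

def or (φ ψ : LProp S) : LProp S := .neg (.and (.neg φ) (.neg ψ))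

/-- Boolean evaluation of a formula treating the basic formulas as atoms. -/
def evalB (v : LProp S → Prop) : LProp S → Prop
  | .neg φ => ¬ evalB v φ
  | .and φ ψ => evalB v φ ∧ evalB v ψ
  | .basic g X x => v (.basic g X x)

/-- Instances of propositional tautologies in `Lprop(S)`. -/
def Taut (φ : LProp S) : Prop := ∀ v : LProp S → Prop, evalB v φ

/-- Disjunction of a nonempty list of formulas. -/
def bigOrNe : LProp S → List (LProp S) → LProp S
  | φ, [] => φ
  | φ, ψ :: l => or φ (bigOrNe ψ l)

end LProp

/-- The proof system AXun(S): C0 (propositional tautologies), C1 (equality),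
C2 (definiteness), C3 (composition), C4 (effectiveness), C5 (reversibility),
with modus ponens. -/
inductive AXunProv (S : Signature) : LProp S → Prop
  | taut {φ : LProp S} : LProp.Taut φ → AXunProv S φ
  | c1 (g : S.Intervention) (X : S.endo) (x x' : S.range X) (h : x ≠ x') :
      AXunProv S (LProp.imp (.basic g X x) (.neg (.basic g X x')))
  | c2 (g : S.Intervention) (X : S.endo) (x0 : S.range X) (l : List (S.range X))
      (h : x0 :: l = (Finset.univ : Finset (S.range X)).toList) :
      AXunProv S (LProp.bigOrNe (.basic g X x0) (l.map (fun x => LProp.basic g X x)))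
  | c3 (g : S.Intervention) (W : S.endo) (w : S.range W) (Y : S.endo) (y : S.range Y)
      (hW : g W = none) :
      AXunProv S (LProp.imp (.and (.basic g W w) (.basic g Y y))
        (.basic (Function.update g W (some w)) Y y))
  | c4 (g : S.Intervention) (X : S.endo) (x : S.range X) (h : g X = some x) :
      AXunProv S (.basic g X x)
  | c5 (g : S.Intervention) (W : S.endo) (w : S.range W) (Y : S.endo) (y : S.range Y)
      (hne : Y ≠ W) (hW : g W = none) (hY : g Y = none) :
      AXunProv S (LProp.imp
        (.and (.basic (Function.update g W (some w)) Y y)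
              (.basic (Function.update g Y (some y)) W w))
        (.basic g Y y))
  | mp {φ ψ : LProp S} : AXunProv S (LProp.imp φ ψ) → AXunProv S φ → AXunProv S ψ

/-! ## The language Lex(S) -/

/-- Boolean combinations of atoms `X = x`. -/
inductive BForm (S : Signature) : Type
  | atom (X : S.endo) (x : S.range X) : BForm S
  | neg : BForm S → BForm S
  | and : BForm S → BForm S → BForm S

def BForm.holds {S : Signature} (a : S.Asgn) : BForm S → Prop
  | .atom X x => a X = x
  | .neg φ => ¬ BForm.holds a φ
  | .and φ ψ => BForm.holds a φ ∧ BForm.holds a ψ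

/-- `Lex(S)`: Boolean combinations of basic formulas `[Y⃗ ← y⃗]ψ`, where `ψ` is a
Boolean combination of atoms. -/
inductive LEx (S : Signature) : Type
  | basic (g : S.Intervention) (ψ : BForm S) : LEx S
  | neg : LEx S → LEx S
  | and : LEx S → LEx S → LEx S

/-- Satisfaction of `Lex(S)` formulas in a causal model, relative to a context. -/
def CausalModel.satEx {S : Signature} (T : CausalModel S) (u : S.Ctx) : LEx S → Prop
  | .basic g ψ => ∀ a : S.Asgn, T.isSolution g u a → ψ.holds a
  | .neg φ => ¬ CausalModel.satEx T u φ
  | .and φ ψ => CausalModel.satEx T u φ ∧ CausalModel.satEx T u ψ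

/-! ## The counterfactual language L^C(Φ) and the system AX -/

/-- The language `L^C(Φ)`: primitive propositions closed under `∧`, `¬` and the
counterfactual connective `>` (`cf`). -/
inductive CForm (Φ : Type) : Type
  | atom : Φ → CForm Φ
  | fls : CForm Φ
  | neg : CForm Φ → CForm Φ
  | and : CForm Φ → CForm Φ → CForm Φ
  | cf : CForm Φ → CForm Φ → CForm Φ

namespace CForm

variable {Φ : Type}

def tr : CForm Φ := neg fls

def or (φ ψ : CForm Φ) : CForm Φ := neg (and (neg φ) (neg ψ))

def imp (φ ψ : CForm Φ) : CForm Φ := or (neg φ) ψ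

def iff (φ ψ : CForm Φ) : CForm Φ := and (imp φ ψ) (imp ψ φ)

/-- Boolean evaluation treating atoms and counterfactuals as atomic. -/
def evalB (v : CForm Φ → Prop) : CForm Φ → Prop
  | fls => False
  | neg φ => ¬ evalB v φ
  | and φ ψ => evalB v φ ∧ evalB v ψ
  | atom p => v (atom p)
  | cf φ ψ => v (cf φ ψ)

/-- Instances of propositional tautologies in `L^C(Φ)`. -/
def Taut (φ : CForm Φ) : Prop := ∀ v : CForm Φ → Prop, evalB v φ

def bigAnd : List (CForm Φ) → CForm Φ
  | [] => tr
  | [φ] => φ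
  | φ :: l => and φ (bigAnd l)

def bigOr : List (CForm Φ) → CForm Φ
  | [] => fls
  | [φ] => φ
  | φ :: l => or φ (bigOr l)

end CForm

/-- Provability in the system AX (axioms A0–A6, rules MP, RA1, RA2), augmented
with an arbitrary set `extra` of additional axioms. -/
inductive AXProv (Φ : Type) (extra : CForm Φ → Prop) : CForm Φ → Prop
  | taut {φ} : CForm.Taut φ → AXProv Φ extra φ
  | ax {φ} : extra φ → AXProv Φ extra φ
  | a1 (φ) : AXProv Φ extra (CForm.cf φ φ)
  | a2 (φ ψ1 ψ2) : AXProv Φ extra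
      (CForm.imp (CForm.and (CForm.cf φ ψ1) (CForm.cf φ ψ2)) (CForm.cf φ (CForm.and ψ1 ψ2)))
  | a3 (φ1 φ2 ψ) : AXProv Φ extra
      (CForm.imp (CForm.and (CForm.cf φ1 φ2) (CForm.cf φ1 ψ)) (CForm.cf (CForm.and φ1 φ2) ψ))
  | a4 (φ1 φ2 ψ) : AXProv Φ extra
      (CForm.imp (CForm.and (CForm.cf φ1 ψ) (CForm.cf φ2 ψ)) (CForm.cf (CForm.or φ1 φ2) ψ))
  | a5 : AXProv Φ extra (CForm.neg (CForm.cf CForm.tr CForm.fls))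
  | a6 (φ ψ) : AXProv Φ extra (CForm.imp φ (CForm.iff ψ (CForm.cf φ ψ)))
  | mp {φ ψ} : AXProv Φ extra (CForm.imp φ ψ) → AXProv Φ extra φ → AXProv Φ extra ψ
  | ra1 {φ φ' ψ} : AXProv Φ extra (CForm.iff φ φ') →
      AXProv Φ extra (CForm.imp (CForm.cf φ ψ) (CForm.cf φ' ψ))
  | ra2 {ψ ψ' φ} : AXProv Φ extra (CForm.imp ψ ψ') →
      AXProv Φ extra (CForm.imp (CForm.cf φ ψ) (CForm.cf φ ψ'))

/-- The axiom scheme A7. -/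
def A7Scheme (Φ : Type) : CForm Φ → Prop := fun θ =>
  ∃ φ ψ1 ψ2 : CForm Φ, θ = CForm.imp (CForm.cf φ (CForm.or ψ1 ψ2))
    (CForm.or (CForm.cf φ ψ1) (CForm.cf φ ψ2))

/-- Satisfaction of `L^C(Φ)` formulas in a counterfactual structure. -/
def CStruct.satC {Φ : Type} (M : CStruct Φ) : M.World → CForm Φ → Prop
  | w, .atom p => M.val w p
  | _, .fls => False
  | w, .neg φ => ¬ CStruct.satC M w φ
  | w, .and φ ψ => CStruct.satC M w φ ∧ CStruct.satC M w ψ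
  | w, .cf φ ψ => ∀ v ∈ M.closest w (fun u => CStruct.satC M u φ), CStruct.satC M v ψ

/-! ## The signature with three binary endogenous variables -/

/-- The signature with endogenous variables `V = {X1, X2, X3}` (as `Fin 3`), each
with range `{0, 1}` (as `Fin 2`), and an arbitrary exogenous part. -/
abbrev S3 (E : Type) (eF : Fintype E) (er : E → Type)
    (erF : ∀ e, Fintype (er e)) (erN : ∀ e, Nonempty (er e)) : Signature :=
  { exo := E
    endo := Fin 3
    exoFin := eF
    endoFin := inferInstance
    endoDec := inferInstance
    exoRange := er
    range := fun _ => Fin 2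
    exoRangeFin := erF
    rangeFin := fun _ => inferInstance
    exoRangeNe := erN
    rangeNe := fun _ => ⟨0⟩ }

/-- The intervention `Xi ← 1`. -/
def gI {E : Type} {eF : Fintype E} {er : E → Type}
    {erF : ∀ e, Fintype (er e)} {erN : ∀ e, Nonempty (er e)}
    (i : Fin 3) : (S3 E eF er erF erN).Intervention :=
  fun j => if j = i then some (1 : Fin 2) else none

/-- The intervention `Xi ← 1; Xj ← 1`. -/
def gII {E : Type} {eF : Fintype E} {er : E → Type}
    {erF : ∀ e, Fintype (er e)} {erN : ∀ e, Nonempty (er e)}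
    (i j : Fin 3) : (S3 E eF er erF erN).Intervention :=
  fun k => if k = i ∨ k = j then some (1 : Fin 2) else none

/-- The formula φ : `[X1←1](X2 = 1) ∧ [X1←1](X3 = 0) ∧ [X2←1](X3 = 1) ∧
[X2←1](X1 = 0) ∧ [X3←1](X1 = 1) ∧ [X3←1](X2 = 0)`. -/
def phi3 {E : Type} {eF : Fintype E} {er : E → Type}
    {erF : ∀ e, Fintype (er e)} {erN : ∀ e, Nonempty (er e)} :
    LProp (S3 E eF er erF erN) :=
  .and (.basic (gI 0) 1 1) <| .and (.basic (gI 0) 2 0) <| .and (.basic (gI 1) 2 1) <|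
    .and (.basic (gI 1) 0 0) <| .and (.basic (gI 2) 0 1) (.basic (gI 2) 1 0)


/-! In a structure of `M⁺` the closest `A`-world to `w` is unique whenever some `A`-world lies in
`W_w` (finiteness gives one, totality makes it unique). If it satisfies `B`, it is also the closest
`A ∧ B`-world, so `A > C` and `(A ∧ B) > C` are evaluated at the same world. With `A` the
antecedent `X⃗ = x⃗` and `B` the formula `W = w`, this is strong composition. -/

namespace CStruct

variable {Φ : Type} {M : CStruct Φ} {w : M.World} {A : M.World → Prop}

lemma lt_trans_of_inW {u v x : M.World} (hu : M.inW w u) (hv : M.inW w v) (hx : M.inW w x)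
    (huv : M.lt w u v) (hvx : M.lt w v x) : M.lt w u x :=
  ⟨M.trans_on w u v x hu hv hx huv.1 hvx.1,
    fun hxu => hvx.2 (M.trans_on w x u v hx hu hv hxu huv.1)⟩

lemma closest_nonempty {v : M.World} (hv : M.inW w v) (hA : A v) :
    (M.closest w A).Nonempty := by
  let Cand := {u : M.World // M.inW w u ∧ A u}
  let r : Cand → Cand → Prop := fun a b => M.lt w a.1 b.1
  have : Std.Irrefl r := ⟨fun _ h => h.2 h.1⟩
  have : IsTrans Cand r := ⟨fun a b c => lt_trans_of_inW a.2.1 b.2.1 c.2.1⟩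
  obtain ⟨m, -, hm⟩ :=
    (Finite.wellFounded_of_trans_of_irrefl r).has_min Set.univ ⟨⟨v, hv, hA⟩, trivial⟩
  exact ⟨m.1, m.2.1, m.2.2, fun u hu hlt => hm ⟨u, ⟨m.1, hlt.1⟩, hu⟩ trivial hlt⟩

lemma closest_subsingleton (hT : M.totalOrd) : (M.closest w A).Subsingleton := by
  intro v₁ h₁ v₂ h₂
  by_contra hne
  rcases hT w v₁ v₂ h₁.1 h₂.1 hne with h | h
  · exact h₂.2.2 v₁ h₁.2.1 h
  · exact h₁.2.2 v₂ h₂.2.1 h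

lemma mem_closest_and {B : M.World → Prop} {v : M.World} (hv : v ∈ M.closest w A) (hB : B v) :
    v ∈ M.closest w (fun u => A u ∧ B u) :=
  ⟨hv.1, ⟨hv.2.1, hB⟩, fun u hu => hv.2.2 u hu.1⟩

theorem cfSat_and_iff (hT : M.totalOrd) {B C : M.World → Prop} (hAB : M.cfSat w A B) :
    M.cfSat w (fun u => A u ∧ B u) C ↔ M.cfSat w A C := by
  refine ⟨fun h v hv => h v (mem_closest_and hv (hAB v hv)), fun h u hu => ?_⟩
  obtain ⟨v, hv⟩ := closest_nonempty hu.1 hu.2.1.1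
  have hvu : v = u := closest_subsingleton hT (mem_closest_and hv (hAB v hv)) hu
  exact hvu ▸ h v hv

end CStruct

lemma intAnte_update_of_eq_none {S : Signature} (M : CStruct S.Atom) {g : S.Intervention}
    {W : S.endo} (hW : g W = none) (x : S.range W) (v : M.World) :
    intAnte S M (Function.update g W (some x)) v ↔ intAnte S M g v ∧ M.val v ⟨W, x⟩ := by
  constructor
  · intro h
    refine ⟨fun Z z hZ => h Z z ?_, h W x (by simp)⟩
    have hZW : Z ≠ W := by rintro rfl; simp [hW] at hZ
    rwa [Function.update_of_ne hZW]
  · rintro ⟨hg, hx⟩ Z z hZ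
    by_cases hZW : Z = W
    · subst hZW
      obtain rfl : x = z := by simpa using hZ
      exact hx
    · exact hg Z z (by rwa [Function.update_of_ne hZW] at hZ)

theorem stmt6_general (S : Signature) (M : CStruct S.Atom) (hM : MRec S M)
    (w : M.World) (g : S.Intervention) (W Y : S.endo)
    (hW : g W = none) (wv : S.range W) (y : S.range Y) :
    satBasic S M w g W wv →
    (satBasic S M w g Y y ↔ satBasic S M w (Function.update g W (some wv)) Y y) := by
  intro hWwv
  obtain ⟨-, -, hT, -⟩ := hM
  have hAnte : intAnte S M (Function.update g W (some wv)) =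
      fun v => intAnte S M g v ∧ M.val v ⟨W, wv⟩ :=
    funext fun v => propext (intAnte_update_of_eq_none M hW wv v)
  rw [satBasic, satBasic, hAnte]
  exact (CStruct.cfSat_and_iff hT hWwv).symm

/-- Every instance of the strong Composition scheme,
`[X⃗←x⃗](W = w) → ([X⃗←x⃗](Y = y) ↔ [X⃗←x⃗; W←w](Y = y))` for `W` not in `X⃗`
and `Y ≠ W`, is valid with respect to `Mrec(Φ_S)`. -/
theorem stmt6 (S : Signature) (M : CStruct S.Atom) (hM : MRec S M)
    (w : M.World) (g : S.Intervention) (W Y : S.endo) (hne : Y ≠ W)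
    (hW : g W = none) (wv : S.range W) (y : S.range Y) :
    satBasic S M w g W wv →
    (satBasic S M w g Y y ↔ satBasic S M w (Function.update g W (some wv)) Y y) :=
  stmt6_general S M hM w g W Y hW wv y
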